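/- arXiv:1712.06266 — 3 statements merged into one kernel-verified Lean document; each statement's English description precedes it below -/
import Mathlib

section
/- Let f ∈ ℂ[[ε_1,…,ε_{n+m}]] be a formal power series, k∉ℚ, and α an odd root. Then s_α f - f lies in the ideal generated by α² if and only if the directional derivative ∂_α f (defined on generators by ∂_α(v)=(α,v)) lies in the ideal generated by α. -/
/-!
Modulo `α²`, both `f ↦ s_α f` and `f ↦ f - (2 / (1 + k)) α ∂_α f` are ℂ-algebra maps (the second
one by the Leibniz rule), and they agree on the generators `ε_t`. Both are continuous for the
`(ε)`-adic topology, polynomials are dense in `ℂ[[ε]]`, and every ideal of the Noetherian local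
ring `ℂ[[ε]]` is closed by Krull's intersection theorem; hence
`s_α f ≡ f - (2 / (1 + k)) α ∂_α f (mod α²)` for every `f`. As `1 + k ≠ 0` and `α` is not a zero
divisor, `s_α f - f ∈ (α²)` iff `α ∂_α f ∈ (α²)` iff `∂_α f ∈ (α)`.
-/

open MvPowerSeries

theorem Ideal.mem_of_forall_mem_sup_pow {R : Type*} [CommRing R] [IsNoetherianRing R]
    [IsLocalRing R] {I : Ideal R} (hI : I ≠ ⊤) (J : Ideal R) {x : R}
    (hx : ∀ n : ℕ, x ∈ J ⊔ I ^ n) : x ∈ J := by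
  rw [← Ideal.Quotient.eq_zero_iff_mem, ← Submodule.mem_bot R,
    ← I.iInf_pow_smul_eq_bot_of_isLocalRing (M := R ⧸ J) hI, Submodule.mem_iInf]
  intro n
  obtain ⟨y, hy, z, hz, rfl⟩ := Submodule.mem_sup.mp (hx n)
  rw [map_add, Ideal.Quotient.eq_zero_iff_mem.mpr hy, zero_add]
  simpa [Algebra.smul_def] using Submodule.smul_mem_smul hz (Submodule.mem_top (x := (1 : R ⧸ J)))

theorem Ideal.mul_mem_span_sq_iff {R : Type*} [CommRing R] [NoZeroDivisors R] {a : R}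
    (ha : a ≠ 0) {x : R} : a * x ∈ Ideal.span {a ^ 2} ↔ x ∈ Ideal.span {a} := by
  rw [Ideal.mem_span_singleton, Ideal.mem_span_singleton, pow_two, mul_dvd_mul_iff_left ha]

namespace Derivation

variable {R A : Type*} [CommRing R] [CommRing A] [Algebra R A]

theorem map_mem_pow (D : Derivation R A A) (I : Ideal A) {n : ℕ} {x : A}
    (hx : x ∈ I ^ (n + 1)) : D x ∈ I ^ n := by
  induction n generalizing x with
  | zero => simp
  | succ n ih =>
    rw [pow_succ'] at hx
    refine Submodule.mul_induction_on hx (fun a ha b hb => ?_) (fun y z hy hz => ?_)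
    · rw [D.leibniz, smul_eq_mul, smul_eq_mul]
      exact add_mem (pow_succ' I n ▸ Ideal.mul_mem_mul ha (ih hb)) (Ideal.mul_mem_right _ _ hb)
    · rw [map_add]
      exact add_mem hy hz

def taylorModSq (D : Derivation R A A) (a : A) : A →ₐ[R] A ⧸ Ideal.span {a ^ 2} where
  toFun f := Ideal.Quotient.mk _ (f + a * D f)
  map_one' := by simp
  map_mul' f g := by
    rw [← map_mul, Ideal.Quotient.eq, Ideal.mem_span_singleton, D.leibniz, smul_eq_mul,
      smul_eq_mul]
    exact ⟨-(D f * D g), by ring⟩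
  map_zero' := by simp
  map_add' f g := by rw [← map_add, D.map_add, mul_add, add_add_add_comm]
  commutes' r := by simp [Ideal.Quotient.mk_algebraMap]

theorem taylorModSq_apply (D : Derivation R A A) (a f : A) :
    D.taylorModSq a f = Ideal.Quotient.mk _ (f + a * D f) := rfl

end Derivation

namespace MvPowerSeries

variable {σ R : Type*} [CommRing R]

theorem span_range_X_le_ker_constantCoeff :
    Ideal.span (Set.range X) ≤ RingHom.ker (constantCoeff (σ := σ) (R := R)) :=
  Ideal.span_le.mpr (by rintro _ ⟨t, rfl⟩; simp)

theorem le_order_of_mem_pow {n : ℕ} {f : MvPowerSeries σ R}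
    (hf : f ∈ Ideal.span (Set.range X) ^ n) : (n : ℕ∞) ≤ f.order := by
  induction n generalizing f with
  | zero => simp
  | succ n ih =>
    rw [pow_succ'] at hf
    refine Submodule.mul_induction_on hf (fun a ha b hb => ?_) (fun y z hy hz => ?_)
    · have ha : 1 ≤ a.order := by
        rw [one_le_order_iff_constCoeff_eq_zero, ← RingHom.mem_ker]
        exact span_range_X_le_ker_constantCoeff ha
      calc ((n + 1 : ℕ) : ℕ∞) = 1 + n := by push_cast; ring
        _ ≤ a.order + b.order := add_le_add ha (ih hb)
        _ ≤ (a * b).order := le_order_mul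
    · exact (le_min hy hz).trans min_order_le_add

/- The truncations of `f` form an adic Cauchy sequence; its limit in the complete ring
`MvPowerSeries σ R` has the coefficients of `f`. -/
theorem sub_truncTotal_mem_pow [Finite σ] (f : MvPowerSeries σ R) (n : ℕ) :
    f - truncTotal n f ∈ Ideal.span (Set.range X) ^ n := by
  set 𝔪 : Ideal (MvPowerSeries σ R) := Ideal.span (Set.range X)
  have smul_top (l : ℕ) : (𝔪 ^ l • ⊤ : Submodule (MvPowerSeries σ R) _) = 𝔪 ^ l := by
    rw [smul_eq_mul, Ideal.mul_top]
  have coe_mem (l : ℕ) {p : MvPolynomial σ R} (hp : p ∈ MvPolynomial.idealOfVars σ R ^ l) :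
      MvPolynomial.coeToMvPowerSeries.ringHom p ∈ 𝔪 ^ l := by
    have := Ideal.mem_map_of_mem MvPolynomial.coeToMvPowerSeries.ringHom hp
    rw [Ideal.map_pow, Ideal.map_span, ← Set.range_comp, Function.comp_def] at this
    simpa only [MvPolynomial.coeToMvPowerSeries.ringHom_apply, MvPolynomial.coe_X] using this
  obtain ⟨L, hL⟩ := IsPrecomplete.prec (I := 𝔪) inferInstance
    (f := fun l => (truncTotal l f : MvPowerSeries σ R)) fun {l m} hlm => by
      rw [SModEq.sub_mem, smul_top, ← MvPolynomial.coeToMvPowerSeries.ringHom_apply,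
        ← MvPolynomial.coeToMvPowerSeries.ringHom_apply, ← map_sub]
      exact coe_mem l (truncTotal_sub_truncTotal_mem_pow_idealOfVars le_rfl hlm f)
  have hLf : L = f := by
    ext d
    have hd := d.degree.lt_succ_self
    have hmem := hL (d.degree + 1)
    rw [SModEq.sub_mem, smul_top] at hmem
    have := coeff_of_lt_order ((Nat.cast_lt.mpr hd).trans_le (le_order_of_mem_pow hmem))
    rw [map_sub, sub_eq_zero, MvPolynomial.coeff_coe, coeff_truncTotal _ hd] at this
    exact this.symm
  have := hL n
  rwa [SModEq.sub_mem, smul_top, hLf, ← neg_mem_iff, neg_sub] at this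

theorem mem_of_forall_coe_mem [Finite σ] [IsNoetherianRing R] [IsLocalRing R]
    (g : MvPowerSeries σ R →+ MvPowerSeries σ R) (J : Ideal (MvPowerSeries σ R))
    (hcoe : ∀ p : MvPolynomial σ R, g p ∈ J)
    (hpow : ∀ n f, f ∈ Ideal.span (Set.range X) ^ (n + 1) → g f ∈ Ideal.span (Set.range X) ^ n)
    (f : MvPowerSeries σ R) : g f ∈ J := by
  have hne_top : Ideal.span (Set.range X) ≠ (⊤ : Ideal (MvPowerSeries σ R)) :=
    ne_top_of_le_ne_top (RingHom.ker_ne_top _) span_range_X_le_ker_constantCoeff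
  refine Ideal.mem_of_forall_mem_sup_pow hne_top J fun n => ?_
  rw [← add_sub_cancel (truncTotal (n + 1) f : MvPowerSeries σ R) f, map_add]
  exact Submodule.add_mem_sup (hcoe _) (hpow n _ (sub_truncTotal_mem_pow f (n + 1)))

theorem mkₐ_comp_eq_taylorModSq [Finite σ] [IsNoetherianRing R] [IsLocalRing R]
    (s : MvPowerSeries σ R →ₐ[R] MvPowerSeries σ R) (D : Derivation R _ _)
    {a : MvPowerSeries σ R} (ha : a ∈ Ideal.span (Set.range X))
    (hs : ∀ t, s (X t) = X t + a * D (X t)) :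
    (Ideal.Quotient.mkₐ R _).comp s = D.taylorModSq a := by
  set 𝔪 : Ideal (MvPowerSeries σ R) := Ideal.span (Set.range X)
  set g : MvPowerSeries σ R →+ MvPowerSeries σ R :=
    (s : _ →+ _) - AddMonoidHom.id _ - (AddMonoidHom.mulLeft a).comp D
  have hg (x : MvPowerSeries σ R) : g x = s x - x - a * D x := rfl
  have hcoe : ((Ideal.Quotient.mkₐ R _).comp s).comp (MvPolynomial.coeToMvPowerSeries.algHom R)
      = (D.taylorModSq a).comp (MvPolynomial.coeToMvPowerSeries.algHom R) :=
    MvPolynomial.algHom_ext fun t => by simp [hs, Derivation.taylorModSq_apply]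
  have hs𝔪 : 𝔪 ≤ 𝔪.comap s := Ideal.span_le.mpr <| by
    rintro _ ⟨t, rfl⟩
    rw [SetLike.mem_coe, Ideal.mem_comap, hs]
    exact add_mem (Ideal.subset_span ⟨t, rfl⟩) (Ideal.mul_mem_right _ _ ha)
  ext f
  rw [AlgHom.comp_apply, Ideal.Quotient.mkₐ_eq_mk, Derivation.taylorModSq_apply,
    Ideal.Quotient.eq, ← sub_sub, ← hg]
  refine mem_of_forall_coe_mem g _ (fun p => ?_) (fun n x hx => ?_) f
  · have := congr($hcoe p)
    simp only [AlgHom.comp_apply, Ideal.Quotient.mkₐ_eq_mk, Derivation.taylorModSq_apply,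
      MvPolynomial.coeToMvPowerSeries.algHom_apply, Algebra.algebraMap_self, map_id,
      RingHom.id_apply] at this
    rwa [Ideal.Quotient.eq, ← sub_sub, ← hg] at this
  · have hsx : s x ∈ 𝔪 ^ (n + 1) := Ideal.le_comap_pow s (n + 1) (Ideal.pow_right_mono hs𝔪 _ hx)
    rw [hg]
    exact sub_mem (sub_mem (Ideal.pow_le_pow_right n.le_succ hsx)
      (Ideal.pow_le_pow_right n.le_succ hx)) (Ideal.mul_mem_left _ _ (D.map_mem_pow 𝔪 hx))

end MvPowerSeries

theorem stmt_2_general (n m : ℕ) (k : ℂ) (hk : ∀ q : ℚ, (q : ℂ) ≠ k)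
    (p : Fin (n + m) → ℕ)
    (i j : Fin (n + m)) (hij : i ≠ j)
    -- `α = ε_i - ε_j` as a (degree one) formal power series
    (α : MvPowerSeries (Fin (n + m)) ℂ)
    (hα : α = MvPowerSeries.X i - MvPowerSeries.X j)
    -- the reflection `s_α` acting on power series, as a ℂ-algebra endomorphism
    -- determined by its action on the generators `ε_t`
    (sA : MvPowerSeries (Fin (n + m)) ℂ →ₐ[ℂ] MvPowerSeries (Fin (n + m)) ℂ)
    (hsA : ∀ t, sA (MvPowerSeries.X t) = MvPowerSeries.X t -
      (MvPowerSeries.C (σ := Fin (n + m)) (R := ℂ))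
        (2 * ((if t = i then k ^ p i else 0) - (if t = j then k ^ p j else 0)) / (1 + k)) * α)
    -- the derivation `∂_α` determined by `∂_α(ε_t) = (α, ε_t)`
    (D : Derivation ℂ (MvPowerSeries (Fin (n + m)) ℂ) (MvPowerSeries (Fin (n + m)) ℂ))
    (hD : ∀ t, D (MvPowerSeries.X t) = (MvPowerSeries.C (σ := Fin (n + m)) (R := ℂ))
      ((if t = i then k ^ p i else 0) - (if t = j then k ^ p j else 0)))
    (f : MvPowerSeries (Fin (n + m)) ℂ) :
    sA f - f ∈ Ideal.span {α ^ 2} ↔ D f ∈ Ideal.span {α} := by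
  have h1k : 1 + k ≠ 0 := fun h => hk (-1) (by push_cast; linear_combination -h)
  have hα0 : α ≠ 0 := by
    rw [hα, sub_ne_zero]
    exact fun h => hij (X_inj.mp h)
  have hα𝔪 : α ∈ Ideal.span (Set.range X) :=
    hα ▸ sub_mem (Ideal.subset_span ⟨i, rfl⟩) (Ideal.subset_span ⟨j, rfl⟩)
  set c : ℂ := 2 / (1 + k)
  have htaylor := mkₐ_comp_eq_taylorModSq sA ((-c) • D) hα𝔪 fun t => by
    rw [hsA, Derivation.smul_apply, hD, smul_eq_C_mul, ← map_mul, neg_mul, map_neg,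
      mul_div_right_comm]
    ring
  have hf : sA f - f + c • (α * D f) ∈ Ideal.span {α ^ 2} := by
    have := congr($htaylor f)
    rwa [AlgHom.comp_apply, Ideal.Quotient.mkₐ_eq_mk, Derivation.taylorModSq_apply,
      Ideal.Quotient.eq, Derivation.smul_apply, mul_smul_comm, neg_smul, sub_add_eq_sub_sub,
      sub_neg_eq_add] at this
  have hc : IsUnit (algebraMap ℂ (MvPowerSeries (Fin (n + m)) ℂ) c) :=
    (isUnit_iff_ne_zero.mpr (div_ne_zero two_ne_zero h1k)).map _
  calc sA f - f ∈ Ideal.span {α ^ 2} ↔ c • (α * D f) ∈ Ideal.span {α ^ 2} :=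
        ⟨fun h => (Ideal.add_mem_iff_right _ h).mp hf, fun h => (Ideal.add_mem_iff_left _ h).mp hf⟩
    _ ↔ D f ∈ Ideal.span {α} := by
        rw [Algebra.smul_def, Ideal.unit_mul_mem_iff_mem _ hc, Ideal.mul_mem_span_sq_iff hα0]

/-- For a formal power series `f`, `k ∉ ℚ`, and an odd root `α = ε_i - ε_j`,
`s_α f - f` lies in the ideal `(α²)` iff `∂_α f` lies in the ideal `(α)`. -/
theorem stmt_2 (n m : ℕ) (k : ℂ) (hk : ∀ q : ℚ, (q : ℂ) ≠ k)
    (p : Fin (n + m) → ℕ) (hp : ∀ t, p t = if (t : ℕ) < n then 0 else 1)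
    (i j : Fin (n + m)) (hij : i ≠ j) (hodd : p i + p j = 1)
    -- `α = ε_i - ε_j` as a (degree one) formal power series
    (α : MvPowerSeries (Fin (n + m)) ℂ)
    (hα : α = MvPowerSeries.X i - MvPowerSeries.X j)
    -- the reflection `s_α` acting on power series, as a ℂ-algebra endomorphism
    -- determined by its action on the generators `ε_t`
    (sA : MvPowerSeries (Fin (n + m)) ℂ →ₐ[ℂ] MvPowerSeries (Fin (n + m)) ℂ)
    (hsA : ∀ t, sA (MvPowerSeries.X t) = MvPowerSeries.X t -
      (MvPowerSeries.C (σ := Fin (n + m)) (R := ℂ))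
        (2 * ((if t = i then k ^ p i else 0) - (if t = j then k ^ p j else 0)) / (1 + k)) * α)
    -- the derivation `∂_α` determined by `∂_α(ε_t) = (α, ε_t)`
    (D : Derivation ℂ (MvPowerSeries (Fin (n + m)) ℂ) (MvPowerSeries (Fin (n + m)) ℂ))
    (hD : ∀ t, D (MvPowerSeries.X t) = (MvPowerSeries.C (σ := Fin (n + m)) (R := ℂ))
      ((if t = i then k ^ p i else 0) - (if t = j then k ^ p j else 0)))
    (f : MvPowerSeries (Fin (n + m)) ℂ) :
    sA f - f ∈ Ideal.span {α ^ 2} ↔ D f ∈ Ideal.span {α} :=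
  stmt_2_general n m k hk p i j hij α hα sA hsA D hD f
end

section
/- For the Bernoulli-type polynomial b_r(x_1,…,x_n,k,h)=Σ_{i=1}^n[B_r(x_i+k(i-1)+h)-B_r(k(i-1)+h)], and for ξ∈ℂ^{n+m}, set b_r^{(n,m)}(ξ)=b_r(ξ_1,…,ξ_n,k,0)+k^{r-1}b_r(ξ_{n+1},…,ξ_{n+m},k^{-1},n). If ξ satisfies (ξ+ρ, ε_i-ε_{n+j})=½(1+k) for given i≤n, j≤m, then b_r^{(n,m)}(ξ)-b_r^{(n,m)}(ξ-(ε_i-ε_{n+j})) = r(ξ_i-1+k(i-1))^{r-1} - r k^{r-1}(ξ_{n+j}+k^{-1}(j-1)+n)^{r-1} = 0. -/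
/-- If `(ξ+ρ, ε_i-ε_{n+j}) = ½(1+k)` then
`b_r^{(n,m)}(ξ) - b_r^{(n,m)}(ξ-(ε_i-ε_{n+j}))
  = r(ξ_i-1+k(i-1))^{r-1} - r k^{r-1}(ξ_{n+j}+k⁻¹(j-1)+n)^{r-1} = 0`. -/
theorem stmt_12 (n m r : ℕ) (hr : 1 ≤ r) (k : ℂ) (hk0 : k ≠ 0)
    (hkirr : ∀ q : ℚ, (q : ℂ) ≠ k)
    -- the `r`-th Bernoulli polynomial
    (Br : ℂ → ℂ) (hBr : ∀ x : ℂ, Br (x + 1) - Br x = (r : ℂ) * x ^ (r - 1))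
    -- `b_r^{(n,m)}(ξ) = b_r(ξ₁,…,ξ_n,k,0) + k^{r-1} b_r(ξ_{n+1},…,ξ_{n+m},k⁻¹,n)`
    (bnm : (ℕ → ℂ) → ℂ)
    (hbnm : ∀ x : ℕ → ℂ, bnm x =
      (∑ t ∈ Finset.range n, (Br (x (t + 1) + k * t) - Br (k * t))) +
        k ^ (r - 1) *
          ∑ t ∈ Finset.range m, (Br (x (n + t + 1) + k⁻¹ * t + n) - Br (k⁻¹ * t + n)))
    (i j : ℕ) (hi1 : 1 ≤ i) (hin : i ≤ n) (hj1 : 1 ≤ j) (hjm : j ≤ m)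
    (ξ : ℕ → ℂ)
    -- the condition `(ξ+ρ, ε_i - ε_{n+j}) = ½(1+k)`
    (hξ : (ξ i + (k * (2 * i - n - 1) - m) / 2)
        - k * (ξ (n + j) + (k⁻¹ * (2 * j - m - 1) + n) / 2) = (1 + k) / 2)
    -- `ξ - (ε_i - ε_{n+j})`
    (ξ' : ℕ → ℂ)
    (hξ' : ξ' = fun t => if t = i then ξ i - 1 else if t = n + j then ξ (n + j) + 1 else ξ t) :
    bnm ξ - bnm ξ' =
        (r : ℂ) * (ξ i - 1 + k * ((i : ℂ) - 1)) ^ (r - 1)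
          - (r : ℂ) * k ^ (r - 1) * (ξ (n + j) + k⁻¹ * ((j : ℂ) - 1) + n) ^ (r - 1) ∧
      (r : ℂ) * (ξ i - 1 + k * ((i : ℂ) - 1)) ^ (r - 1)
          - (r : ℂ) * k ^ (r - 1) * (ξ (n + j) + k⁻¹ * ((j : ℂ) - 1) + n) ^ (r - 1) = 0 := by
  subst hξ'
  have hkk : k * k⁻¹ = 1 := mul_inv_cancel₀ hk0
  have key : ξ i - 1 + k * ((i : ℂ) - 1) = k * (ξ (n + j) + k⁻¹ * ((j : ℂ) - 1) + n) := by
    linear_combination hξ + ((1 - (m : ℂ)) / 2) * hkk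
  have hci : ((i - 1 : ℕ) : ℂ) = (i : ℂ) - 1 := by
    have := Nat.cast_sub (R := ℂ) hi1; simpa using this
  have hcj : ((j - 1 : ℕ) : ℂ) = (j : ℂ) - 1 := by
    have := Nat.cast_sub (R := ℂ) hj1; simpa using this
  have E1 : ∑ t ∈ Finset.range n,
        ((Br (ξ (t + 1) + k * t) - Br (k * t)) -
          (Br ((if t + 1 = i then ξ i - 1 else if t + 1 = n + j then ξ (n + j) + 1 else ξ (t + 1))
            + k * t) - Br (k * t))) =
      (r : ℂ) * (ξ i - 1 + k * ((i : ℂ) - 1)) ^ (r - 1) := by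
    rw [Finset.sum_eq_single_of_mem (i - 1) (by simp; omega)]
    · have h1 : i - 1 + 1 = i := by omega
      rw [if_pos h1, h1, hci]
      have := hBr (ξ i - 1 + k * ((i : ℂ) - 1))
      rw [show ξ i - 1 + k * ((i : ℂ) - 1) + 1 = ξ i + k * ((i : ℂ) - 1) by ring] at this
      linear_combination this
    · intro t ht hti
      rw [Finset.mem_range] at ht
      rw [if_neg (by omega), if_neg (by omega)]
      ring
  have E2 : ∑ t ∈ Finset.range m,
        ((Br (ξ (n + t + 1) + k⁻¹ * t + n) - Br (k⁻¹ * t + n)) -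
          (Br ((if n + t + 1 = i then ξ i - 1 else if n + t + 1 = n + j then ξ (n + j) + 1
              else ξ (n + t + 1)) + k⁻¹ * t + n) - Br (k⁻¹ * t + n))) =
      -((r : ℂ) * (ξ (n + j) + k⁻¹ * ((j : ℂ) - 1) + n) ^ (r - 1)) := by
    rw [Finset.sum_eq_single_of_mem (j - 1) (by simp; omega)]
    · have h1 : n + (j - 1) + 1 = n + j := by omega
      rw [if_neg (by omega), if_pos h1, h1, hcj]
      have := hBr (ξ (n + j) + k⁻¹ * ((j : ℂ) - 1) + n)
      rw [show ξ (n + j) + k⁻¹ * ((j : ℂ) - 1) + n + 1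
          = ξ (n + j) + 1 + k⁻¹ * ((j : ℂ) - 1) + n by ring] at this
      linear_combination -this
    · intro t ht htj
      rw [Finset.mem_range] at ht
      rw [if_neg (by omega), if_neg (by omega)]
      ring
  constructor
  · rw [hbnm, hbnm]
    rw [Finset.sum_sub_distrib] at E1 E2
    linear_combination E1 + k ^ (r - 1) * E2
  · rw [key, mul_pow]; ring
end

section
/- Let H(n,m) be the set of partitions λ with λ_{n+1} ≤ m. For a pair of partitions (λ,μ) and the map F(λ,μ)=(λ̃,μ̃) with λ̃_i = λ_i - λ_{n+1} (for 1≤i≤n+1) and μ̃'_j = μ'_j - μ'_{m+1} (for 1≤j≤m+1), set ñ=n-μ'_{m+1}, m̃=m-λ_{n+1}. If there exist p,q,r,s≥0 with p+q=n, r+s=m, λ∈H(p,r), μ∈H(q,s) (i.e., (λ,μ)∈Cr(n,m)), then F(λ,μ)∈Cr(ñ,m̃); specifically λ̃_{p+1} ≤ m̃-s and μ̃'_{s+1} ≤ ñ-p. -/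
/-- If `(λ,μ) ∈ Cr(n,m)` (i.e. `λ_{p+1} ≤ r`, `μ_{q+1} ≤ s` with `p+q=n`, `r+s=m`),
then `F(λ,μ) ∈ Cr(ñ,m̃)`, namely `λ̃_{p+1} ≤ m̃ - s` and `μ̃'_{s+1} ≤ ñ - p`, where
`λ̃_i = λ_i - λ_{n+1}`, `μ̃'_j = μ'_j - μ'_{m+1}`, `ñ = n - μ'_{m+1}`,
`m̃ = m - λ_{n+1}`. -/
theorem stmt_17 (n m : ℕ)
    (lam mu : ℕ → ℕ)
    -- `λ` and `μ` are partitions (weakly decreasing on indices `≥ 1`)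
    (hlam : ∀ i i', 1 ≤ i → i ≤ i' → lam i' ≤ lam i)
    (hmu : ∀ i i', 1 ≤ i → i ≤ i' → mu i' ≤ mu i)
    -- `μ'` is the conjugate partition of `μ`: `i ≤ μ'_j ↔ j ≤ μ_i`
    (mu' : ℕ → ℕ)
    (hmu' : ∀ i j, 1 ≤ i → 1 ≤ j → (i ≤ mu' j ↔ j ≤ mu i))
    (p q r s : ℕ) (hpq : p + q = n) (hrs : r + s = m)
    (hH1 : lam (p + 1) ≤ r) (hH2 : mu (q + 1) ≤ s) :
    ((lam (p + 1) : ℤ) - lam (n + 1)) ≤ ((m : ℤ) - lam (n + 1)) - s ∧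
      ((mu' (s + 1) : ℤ) - mu' (m + 1)) ≤ ((n : ℤ) - mu' (m + 1)) - p := by
  have h2 : mu' (s + 1) ≤ q := by
    by_contra h
    push_neg at h
    have := (hmu' (q + 1) (s + 1) (by omega) (by omega)).mp (by omega)
    omega
  omega
end
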